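/- Let n be a positive integer, let x₁ ≤ x₂ ≤ … ≤ xₙ and y₁, …, yₙ be real numbers, let m_x and m_y be the means of the xᵢ and yᵢ respectively, and for 1 ≤ i ≤ n let Uᵢ = { j : 1 ≤ j < i, yⱼ < yᵢ }. Then D := Σ_{i=1}^{n} Σ_{j=1}^{n} |xᵢ − xⱼ|·|yᵢ − yⱼ| = 4·Σ_{i=1}^{n} Σ_{j ∈ Uᵢ} (xᵢ − xⱼ)·(yᵢ − yⱼ) − 2n·Σ_{i=1}^{n} (xᵢ − m_x)·(yᵢ − m_y). -/

import Mathlib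

/-!
The summand `|xᵢ − xⱼ|·|yᵢ − yⱼ| + (xᵢ − xⱼ)(yᵢ − yⱼ)` is symmetric in `i, j`, vanishes on the
diagonal, and for `j < i` (where `xᵢ − xⱼ ≥ 0`) equals `2(xᵢ − xⱼ)(yᵢ − yⱼ)` if `yⱼ < yᵢ` and `0`
otherwise. Summing over all pairs therefore gives `4 Σᵢ Σ_{j ∈ Uᵢ} (xᵢ − xⱼ)(yᵢ − yⱼ)`, while the
double sum of `(xᵢ − xⱼ)(yᵢ − yⱼ)` alone is `2n` times the centered cross product.
-/

open Finset

theorem abs_mul_abs_add_mul_of_nonneg {R : Type*} [Ring R] [LinearOrder R] [IsOrderedRing R]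
    {a b : R} (ha : 0 ≤ a) : |a| * |b| + a * b = if 0 < b then 2 * (a * b) else 0 := by
  split_ifs with hb
  · rw [abs_of_nonneg ha, abs_of_pos hb, two_mul]
  · rw [abs_of_nonneg ha, abs_of_nonpos (not_lt.mp hb), mul_neg, neg_add_cancel]

namespace Finset

variable {α M : Type*}

theorem sum_sum_eq_two_nsmul_sum_sum_lt [LinearOrder α] [AddCommMonoid M] (s : Finset α)
    (g : α → α → M) (hsymm : ∀ i j, g i j = g j i) (hdiag : ∀ i, g i i = 0) :
    ∑ i ∈ s, ∑ j ∈ s, g i j = 2 • ∑ i ∈ s, ∑ j ∈ s with j < i, g i j := by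
  have hsplit : ∀ i j, g i j = (if j < i then g i j else 0) + (if i < j then g i j else 0) := by
    intro i j
    rcases lt_trichotomy i j with h | rfl | h
    · simp [h, h.not_gt]
    · simp [hdiag]
    · simp [h, h.not_gt]
  have hswap : ∑ i ∈ s, ∑ j ∈ s, (if i < j then g i j else 0)
      = ∑ i ∈ s, ∑ j ∈ s, (if j < i then g i j else 0) := by
    rw [sum_comm]
    simp only [hsymm]
  calc ∑ i ∈ s, ∑ j ∈ s, g i j
      = ∑ i ∈ s, ∑ j ∈ s, ((if j < i then g i j else 0) + (if i < j then g i j else 0)) :=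
        sum_congr rfl fun i _ => sum_congr rfl fun j _ => hsplit i j
    _ = ∑ i ∈ s, ∑ j ∈ s, (if j < i then g i j else 0)
          + ∑ i ∈ s, ∑ j ∈ s, (if i < j then g i j else 0) := by
        simp only [sum_add_distrib]
    _ = 2 • ∑ i ∈ s, ∑ j ∈ s with j < i, g i j := by
        rw [hswap, two_nsmul]
        simp only [sum_filter]

variable {ι R : Type*}

theorem sum_sum_sub_mul_sub [CommRing R] (s : Finset ι) (a b : ι → R) :
    ∑ i ∈ s, ∑ j ∈ s, (a i - a j) * (b i - b j)
      = 2 * (#s * ∑ i ∈ s, a i * b i - (∑ i ∈ s, a i) * ∑ i ∈ s, b i) := by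
  simp only [sub_mul, mul_sub, sum_sub_distrib, sum_const, nsmul_eq_mul, ← mul_sum, ← sum_mul]
  ring

theorem card_mul_sum_sub_mean_mul_sub_mean [Field R] [CharZero R] (s : Finset ι) (a b : ι → R) :
    #s * ∑ i ∈ s, (a i - (∑ j ∈ s, a j) / #s) * (b i - (∑ j ∈ s, b j) / #s)
      = #s * ∑ i ∈ s, a i * b i - (∑ i ∈ s, a i) * ∑ i ∈ s, b i := by
  rcases s.eq_empty_or_nonempty with rfl | hs
  · simp
  have hcard : (#s : R) ≠ 0 := Nat.cast_ne_zero.mpr hs.card_pos.ne'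
  simp only [sub_mul, mul_sub, sum_sub_distrib, sum_const, nsmul_eq_mul, ← mul_sum, ← sum_mul]
  field_simp
  ring

theorem sum_abs_mul_abs_add_mul_eq_two_mul_sum_filter [Ring R] [LinearOrder R] [IsOrderedRing R]
    (t : Finset ι) (x y : ι → R) {i : ι} (hx : ∀ j ∈ t, x j ≤ x i) :
    ∑ j ∈ t, (|x i - x j| * |y i - y j| + (x i - x j) * (y i - y j))
      = 2 * ∑ j ∈ t with y j < y i, (x i - x j) * (y i - y j) := by
  rw [sum_filter, mul_sum]
  refine sum_congr rfl fun j hj => ?_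
  simp only [abs_mul_abs_add_mul_of_nonneg (sub_nonneg.mpr (hx j hj)), sub_pos, mul_ite, mul_zero]

end Finset

theorem D_eq_four_sum_U_sub_two_n_centered_general
    (n : ℕ) (x y : ℕ → ℝ)
    (hsorted : ∀ i j : ℕ, 1 ≤ i → i ≤ j → j ≤ n → x i ≤ x j)
    (mx my : ℝ)
    (hmx : mx = (∑ i ∈ Finset.Icc 1 n, x i) / n)
    (hmy : my = (∑ i ∈ Finset.Icc 1 n, y i) / n)
    (U : ℕ → Finset ℕ)
    (hU : ∀ i : ℕ, U i = (Finset.Ico 1 i).filter (fun j => y j < y i)) :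
    ∑ i ∈ Finset.Icc 1 n, ∑ j ∈ Finset.Icc 1 n, |x i - x j| * |y i - y j|
      = 4 * ∑ i ∈ Finset.Icc 1 n, ∑ j ∈ U i, (x i - x j) * (y i - y j)
        - 2 * (n : ℝ) * ∑ i ∈ Finset.Icc 1 n, (x i - mx) * (y i - my) := by
  have hcentered : ∑ i ∈ Icc 1 n, ∑ j ∈ Icc 1 n, (x i - x j) * (y i - y j)
      = 2 * (n : ℝ) * ∑ i ∈ Icc 1 n, (x i - mx) * (y i - my) := by
    rw [sum_sum_sub_mul_sub, ← card_mul_sum_sub_mean_mul_sub_mean, Nat.card_Icc,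
      Nat.add_sub_cancel, hmx, hmy]
    ring
  have hbelow : ∀ i ∈ Icc 1 n, ∑ j ∈ Icc 1 n with j < i,
      (|x i - x j| * |y i - y j| + (x i - x j) * (y i - y j))
        = 2 * ∑ j ∈ U i, (x i - x j) * (y i - y j) := by
    intro i hi
    have hin : i ≤ n := (mem_Icc.mp hi).2
    rw [← Ico_add_one_right_eq_Icc, Ico_filter_lt, min_eq_right (by omega), hU]
    exact sum_abs_mul_abs_add_mul_eq_two_mul_sum_filter _ x y fun j hj =>
      hsorted j i (mem_Ico.mp hj).1 (mem_Ico.mp hj).2.le hin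
  have hsum : ∑ i ∈ Icc 1 n, ∑ j ∈ Icc 1 n, |x i - x j| * |y i - y j|
      + ∑ i ∈ Icc 1 n, ∑ j ∈ Icc 1 n, (x i - x j) * (y i - y j)
        = 4 * ∑ i ∈ Icc 1 n, ∑ j ∈ U i, (x i - x j) * (y i - y j) := by
    simp only [← sum_add_distrib]
    rw [sum_sum_eq_two_nsmul_sum_sum_lt _ _
      (fun i j => by rw [abs_sub_comm (x i), abs_sub_comm (y i)]; ring) (fun i => by simp),
      sum_congr rfl hbelow, ← mul_sum, nsmul_eq_mul]
    ring
  linarith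

/-- For `x` sorted nondecreasingly, means `m_x, m_y`, and `Uᵢ = { j : 1 ≤ j < i, yⱼ < yᵢ }`,
`D = Σᵢ Σⱼ |xᵢ − xⱼ|·|yᵢ − yⱼ|
   = 4·Σᵢ Σ_{j∈Uᵢ} (xᵢ − xⱼ)(yᵢ − yⱼ) − 2n·Σᵢ (xᵢ − m_x)(yᵢ − m_y)`. -/
theorem D_eq_four_sum_U_sub_two_n_centered
    (n : ℕ) (hn : 0 < n) (x y : ℕ → ℝ)
    (hsorted : ∀ i j : ℕ, 1 ≤ i → i ≤ j → j ≤ n → x i ≤ x j)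
    (mx my : ℝ)
    (hmx : mx = (∑ i ∈ Finset.Icc 1 n, x i) / n)
    (hmy : my = (∑ i ∈ Finset.Icc 1 n, y i) / n)
    (U : ℕ → Finset ℕ)
    (hU : ∀ i : ℕ, U i = (Finset.Ico 1 i).filter (fun j => y j < y i)) :
    ∑ i ∈ Finset.Icc 1 n, ∑ j ∈ Finset.Icc 1 n, |x i - x j| * |y i - y j|
      = 4 * ∑ i ∈ Finset.Icc 1 n, ∑ j ∈ U i, (x i - x j) * (y i - y j)
        - 2 * (n : ℝ) * ∑ i ∈ Finset.Icc 1 n, (x i - mx) * (y i - my) :=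
  D_eq_four_sum_U_sub_two_n_centered_general n x y hsorted mx my hmx hmy U hU
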